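/- Let η be a p-vector field on a smooth manifold X. Then the interior product i_η : A_X → A_X is a differential operator of order ≤ p on the de Rham algebra, and i_η is a differential operator of order ≤ p−1 if and only if η = 0. -/

import Mathlib

set_option maxHeartbeats 1000000

/-!
STATEMENT 16 (Example 4.4 of the paper):
Let `η` be a `p`-vector field on a smooth manifold `X`.  Then the interior product
`i_η : A_X → A_X` is a differential operator of order `≤ p` on the de Rham algebra, and it is
a differential operator of order `≤ p - 1` if and only if `η = 0`.

Since differential forms on smooth manifolds are not available in Mathlib, the de Rham algebra
of a (parallelizable) manifold is modelled algebraically: `M` is a finite free module over a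
commutative ring `R` (the module of vector fields over the functions), the algebra of forms is
the exterior algebra `Λ := ⋀(M^*)` of the dual module with its standard grading, `p`-vector
fields are the degree `p` component of `⋀ M`, and the interior product is the contraction
operator, obtained from `CliffordAlgebra.contractLeft` (with the zero quadratic form) through
the universal property of `⋀ M`.
-/

variable (R : Type) [CommRing R] [Nontrivial R]
variable (M : Type) [AddCommGroup M] [Module R M] [Module.Free R M] [Module.Finite R M]

/-- The algebra of differential forms: the exterior algebra of the dual module. -/
noncomputable abbrev Forms := ExteriorAlgebra R (Module.Dual R M)

/-- Contraction of forms with a single vector field. -/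
noncomputable def contrLin : M →ₗ[R] Module.End R (Forms R M) :=
  CliffordAlgebra.contractLeft ∘ₗ Module.Dual.eval R M

/-- The interior product `η ↦ i_η`, extended from vector fields to the whole algebra `⋀ M` of
polyvector fields (contraction operators anticommute and square to zero). -/
noncomputable def intProd : ExteriorAlgebra R M →ₐ[R] Module.End R (Forms R M) :=
  CliffordAlgebra.lift (0 : QuadraticForm R M)
    ⟨contrLin R M, fun m => LinearMap.ext fun x => by
      simpa [contrLin] using CliffordAlgebra.contractLeft_contractLeft
        (d := Module.Dual.eval R M m) (x := x)⟩

/-- The standard grading of the algebra of forms, extended by `⊥` in negative degrees. -/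
noncomputable def FormsGrading (n : ℤ) : Submodule R (Forms R M) :=
  if 0 ≤ n then
    LinearMap.range (ExteriorAlgebra.ι R : Module.Dual R M →ₗ[R] Forms R M) ^ n.toNat
  else ⊥

/-- Graded commutator `[f, a·]` of a degree `r` operator with left multiplication by a
degree `i` element. -/
def gcomm {A : Type} [Ring A] [Algebra R A] (r i : ℤ) (f : A →ₗ[R] A) (a : A) : A →ₗ[R] A :=
  f ∘ₗ LinearMap.mulLeft R a - ((r * i).negOnePow : ℤ) • (LinearMap.mulLeft R a ∘ₗ f)

/-- Differential operators of order `≤ k` on a graded algebra, defined recursively via graded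
commutators with left multiplications by homogeneous elements. -/
def IsDiff {A : Type} [Ring A] [Algebra R A] (𝒜 : ℤ → Submodule R A) (r : ℤ) :
    ℕ → (A →ₗ[R] A) → Prop
  | 0, f => ∀ i : ℤ, ∀ a ∈ 𝒜 i, gcomm R r i f a = 0
  | k + 1, f => ∀ i : ℤ, ∀ a ∈ 𝒜 i, IsDiff 𝒜 (r + i) k (gcomm R r i f a)

/-- Differential operators of order `≤ n`, `n : ℤ`; of negative order means being zero. -/
def IsDiffZ {A : Type} [Ring A] [Algebra R A] (𝒜 : ℤ → Submodule R A) (r : ℤ) (n : ℤ)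
    (f : A →ₗ[R] A) : Prop :=
  if 0 ≤ n then IsDiff R 𝒜 r n.toNat f else f = 0


section GenAux

variable {R : Type} [CommRing R] {A : Type} [Ring A] [Algebra R A]

lemma gcomm_apply (r i : ℤ) (f : A →ₗ[R] A) (a x : A) :
    gcomm R r i f a x = f (a * x) - ((r * i).negOnePow : ℤ) • (a * f x) := rfl

lemma gcomm_zero_left (r i : ℤ) (a : A) : gcomm R r i (0 : A →ₗ[R] A) a = 0 := by
  ext x; simp [gcomm_apply]

lemma gcomm_zero_right (r i : ℤ) (f : A →ₗ[R] A) : gcomm R r i f 0 = 0 := by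
  ext x; simp [gcomm_apply]

lemma gcomm_add_left (r i : ℤ) (f g : A →ₗ[R] A) (a : A) :
    gcomm R r i (f + g) a = gcomm R r i f a + gcomm R r i g a := by
  ext x; simp [gcomm_apply, mul_add, smul_add]; abel

lemma gcomm_zsmul_left (r i : ℤ) (c : ℤ) (f : A →ₗ[R] A) (a : A) :
    gcomm R r i (c • f) a = c • gcomm R r i f a := by
  ext x
  simp only [gcomm_apply, LinearMap.smul_apply, smul_sub, mul_smul_comm]
  rw [smul_comm]

lemma isDiff_zero_iff (𝒜 : ℤ → Submodule R A) (r : ℤ) (f : A →ₗ[R] A) :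
    IsDiff R 𝒜 r 0 f ↔ ∀ i : ℤ, ∀ a ∈ 𝒜 i, gcomm R r i f a = 0 := Iff.rfl

lemma isDiff_succ_iff (𝒜 : ℤ → Submodule R A) (r : ℤ) (k : ℕ) (f : A →ₗ[R] A) :
    IsDiff R 𝒜 r (k + 1) f ↔
      ∀ i : ℤ, ∀ a ∈ 𝒜 i, IsDiff R 𝒜 (r + i) k (gcomm R r i f a) := Iff.rfl

lemma isDiff_zero (𝒜 : ℤ → Submodule R A) (r : ℤ) (k : ℕ) :
    IsDiff R 𝒜 r k (0 : A →ₗ[R] A) := by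
  induction k generalizing r with
  | zero => exact fun i a _ => gcomm_zero_left r i a
  | succ k ih => exact fun i a _ => by rw [gcomm_zero_left]; exact ih _

lemma isDiff_add {𝒜 : ℤ → Submodule R A} {k : ℕ} {r : ℤ} {f g : A →ₗ[R] A}
    (hf : IsDiff R 𝒜 r k f) (hg : IsDiff R 𝒜 r k g) : IsDiff R 𝒜 r k (f + g) := by
  induction k generalizing r f g with
  | zero => intro i a ha; rw [gcomm_add_left, hf i a ha, hg i a ha, add_zero]
  | succ k ih => intro i a ha; rw [gcomm_add_left]; exact ih (hf i a ha) (hg i a ha)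

lemma isDiff_zsmul {𝒜 : ℤ → Submodule R A} {k : ℕ} {r : ℤ} (c : ℤ) {f : A →ₗ[R] A}
    (hf : IsDiff R 𝒜 r k f) : IsDiff R 𝒜 r k (c • f) := by
  induction k generalizing r f with
  | zero => intro i a ha; rw [gcomm_zsmul_left, hf i a ha, smul_zero]
  | succ k ih => intro i a ha; rw [gcomm_zsmul_left]; exact ih (hf i a ha)

lemma gcomm_comp (r s i : ℤ) (f g : A →ₗ[R] A) (a : A) :
    gcomm R (r + s) i (f ∘ₗ g) a
      = f ∘ₗ gcomm R s i g a + ((s * i).negOnePow : ℤ) • (gcomm R r i f a ∘ₗ g) := by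
  have hσ : (((r + s) * i).negOnePow : ℤ)
      = ((s * i).negOnePow : ℤ) * ((r * i).negOnePow : ℤ) := by
    rw [add_mul, Int.negOnePow_add]; push_cast; ring
  ext x
  simp only [gcomm_apply, LinearMap.comp_apply, LinearMap.add_apply, LinearMap.smul_apply,
    map_sub, map_zsmul, smul_sub, smul_smul, hσ]
  abel

lemma isDiff_comp {𝒜 : ℤ → Submodule R A} :
    ∀ (m k l : ℕ), k + l = m → ∀ (r s : ℤ) (f g : A →ₗ[R] A),
      IsDiff R 𝒜 r k f → IsDiff R 𝒜 s l g → IsDiff R 𝒜 (r + s) m (f ∘ₗ g) := by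
  intro m
  induction m with
  | zero =>
    intro k l h r s f g hf hg
    obtain ⟨rfl, rfl⟩ : k = 0 ∧ l = 0 := by omega
    intro i a ha
    rw [gcomm_comp, hf i a ha, hg i a ha]
    simp
  | succ m ih =>
    intro k l h r s f g hf hg i a ha
    rw [gcomm_comp]
    refine isDiff_add ?_ ?_
    · cases l with
      | zero =>
        rw [hg i a ha, LinearMap.comp_zero]
        exact isDiff_zero _ _ _
      | succ l' =>
        have h2 := ih k l' (by omega) r (s + i) f (gcomm R s i g a) hf (hg i a ha)
        rwa [← add_assoc] at h2
    · refine isDiff_zsmul _ ?_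
      cases k with
      | zero =>
        rw [hf i a ha, LinearMap.zero_comp]
        exact isDiff_zero _ _ _
      | succ k' =>
        have h2 := ih k' l (by omega) (r + i) s (gcomm R r i f a) g (hf i a ha) hg
        rwa [add_right_comm] at h2

end GenAux
section ExtAux

open ExteriorAlgebra

variable {R : Type} [CommRing R] {N : Type} [AddCommGroup N] [Module R N]

/-- The degree-one part of the exterior algebra. -/
noncomputable abbrev ιRange (R : Type) [CommRing R] (N : Type) [AddCommGroup N]
    [Module R N] : Submodule R (ExteriorAlgebra R N) :=
  LinearMap.range (ExteriorAlgebra.ι R : N →ₗ[R] ExteriorAlgebra R N)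

/-- The standard grading on any exterior algebra. -/
noncomputable def extGrading (R : Type) [CommRing R] (N : Type) [AddCommGroup N]
    [Module R N] (n : ℤ) : Submodule R (ExteriorAlgebra R N) :=
  if 0 ≤ n then ιRange R N ^ n.toNat else ⊥

lemma swap_ι (m : N) {j : ℕ} {b : ExteriorAlgebra R N} (hb : b ∈ ιRange R N ^ j) :
    ι R m * b = ((-1 : ℤ) ^ j) • (b * ι R m) := by
  induction hb using Submodule.pow_induction_on_left' with
  | algebraMap r => simp [Algebra.commutes]
  | add x y i hx hy ihx ihy => simp [mul_add, add_mul, ihx, ihy, smul_add]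
  | mem_mul x hx i z hz ihz =>
    obtain ⟨n, rfl⟩ := hx
    have h1 : ι R m * ι R n = -(ι R n * ι R m) :=
      eq_neg_of_add_eq_zero_left (ι_add_mul_swap m n)
    calc ι R m * (ι R n * z) = (ι R m * ι R n) * z := by rw [mul_assoc]
      _ = -(ι R n * (ι R m * z)) := by rw [h1, neg_mul, mul_assoc]
      _ = -(ι R n * (((-1 : ℤ) ^ i) • (z * ι R m))) := by rw [ihz]
      _ = ((-1 : ℤ) ^ (i + 1)) • (ι R n * z * ι R m) := by
          rw [mul_smul_comm, pow_succ, mul_assoc]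
          simp
  
lemma mul_comm_graded {i j : ℕ} {a b : ExteriorAlgebra R N}
    (ha : a ∈ ιRange R N ^ i) (hb : b ∈ ιRange R N ^ j) :
    a * b = ((-1 : ℤ) ^ (i * j)) • (b * a) := by
  induction ha using Submodule.pow_induction_on_left' with
  | algebraMap r => simp [Algebra.commutes]
  | add x y n hx hy ihx ihy => simp [mul_add, add_mul, ihx, ihy, smul_add]
  | mem_mul x hx n z hz ihz =>
    obtain ⟨m, rfl⟩ := hx
    calc ι R m * z * b = ι R m * (z * b) := by rw [mul_assoc]
      _ = ((-1 : ℤ) ^ (n * j)) • (ι R m * (b * z)) := by rw [ihz, mul_smul_comm]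
      _ = ((-1 : ℤ) ^ (n * j)) • ((ι R m * b) * z) := by rw [mul_assoc]
      _ = ((-1 : ℤ) ^ (n * j) * (-1 : ℤ) ^ j) • (b * (ι R m * z)) := by
          rw [swap_ι m hb, smul_mul_assoc, smul_smul, mul_assoc]
      _ = ((-1 : ℤ) ^ ((n + 1) * j)) • (b * (ι R m * z)) := by
          rw [← pow_add, add_mul, one_mul]

lemma contract_mem (d : Module.Dual R N) {n : ℕ} {a : ExteriorAlgebra R N}
    (ha : a ∈ ιRange R N ^ n) :
    CliffordAlgebra.contractLeft d a ∈ ιRange R N ^ (n - 1) ∧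
      (n = 0 → CliffordAlgebra.contractLeft d a = 0) := by
  induction ha using Submodule.pow_induction_on_left' with
  | algebraMap r =>
    rw [CliffordAlgebra.contractLeft_algebraMap]
    exact ⟨zero_mem _, fun _ => rfl⟩
  | add x y i hx hy ihx ihy =>
    rw [map_add]
    exact ⟨add_mem ihx.1 ihy.1, fun h => by rw [ihx.2 h, ihy.2 h, add_zero]⟩
  | mem_mul x hx i z hz ihz =>
    obtain ⟨v, rfl⟩ := hx
    rw [CliffordAlgebra.contractLeft_ι_mul]
    constructor
    · rw [Nat.succ_sub_one]
      refine sub_mem (Submodule.smul_mem _ _ hz) ?_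
      cases i with
      | zero => rw [ihz.2 rfl, mul_zero]; exact zero_mem _
      | succ i' =>
        have : ι R v * CliffordAlgebra.contractLeft d z ∈
            ιRange R N ^ 1 * ιRange R N ^ i' := by
          refine Submodule.mul_mem_mul ?_ ?_
          · rw [pow_one]; exact ⟨v, rfl⟩
          · simpa using ihz.1
        rwa [← pow_add, add_comm] at this
    · exact fun h => absurd h (Nat.succ_ne_zero i)
  
lemma contract_mul (d : Module.Dual R N) {i : ℕ} {a : ExteriorAlgebra R N}
    (ha : a ∈ ιRange R N ^ i) (x : ExteriorAlgebra R N) :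
    CliffordAlgebra.contractLeft d (a * x)
      = CliffordAlgebra.contractLeft d a * x
        + ((-1 : ℤ) ^ i) • (a * CliffordAlgebra.contractLeft d x) := by
  induction ha using Submodule.pow_induction_on_left' generalizing x with
  | algebraMap r =>
    rw [CliffordAlgebra.contractLeft_algebraMap_mul, CliffordAlgebra.contractLeft_algebraMap]
    simp [Algebra.smul_def]
  | add y z n hy hz ihy ihz =>
    simp [add_mul, map_add, ihy, ihz, smul_add]; abel
  | mem_mul y hy n z hz ihz =>
    obtain ⟨v, rfl⟩ := hy
    rw [mul_assoc, CliffordAlgebra.contractLeft_ι_mul, ihz,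
      CliffordAlgebra.contractLeft_ι_mul]
    simp only [mul_add, sub_mul, add_mul, smul_mul_assoc, mul_smul_comm, mul_sub,
      smul_sub, smul_add, pow_succ, mul_assoc]
    module

end ExtAux
section ExtAux2

open ExteriorAlgebra

variable {R : Type} [CommRing R] {N : Type} [AddCommGroup N] [Module R N]

lemma mem_extGrading_of_pow {n : ℕ} {a : ExteriorAlgebra R N} (ha : a ∈ ιRange R N ^ n) :
    a ∈ extGrading R N (n : ℤ) := by
  rw [extGrading, if_pos (by positivity), Int.toNat_natCast]
  exact ha

lemma extGrading_neg {i : ℤ} (hi : i < 0) {a : ExteriorAlgebra R N}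
    (ha : a ∈ extGrading R N i) : a = 0 := by
  rw [extGrading, if_neg (by omega)] at ha
  exact (Submodule.mem_bot R).mp ha

lemma isDiff_mulLeft {i : ℤ} {a : ExteriorAlgebra R N} (ha : a ∈ extGrading R N i) :
    IsDiff R (extGrading R N) i 0 (LinearMap.mulLeft R a) := by
  intro j b hb
  rcases lt_or_ge i 0 with hi | hi
  · rw [extGrading_neg hi ha, LinearMap.mulLeft_zero_eq_zero, gcomm_zero_left]
  rcases lt_or_ge j 0 with hj | hj
  · rw [extGrading_neg hj hb, gcomm_zero_right]
  rw [extGrading, if_pos hi] at ha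
  rw [extGrading, if_pos hj] at hb
  have hsign : ((i * j).negOnePow : ℤ) = (-1 : ℤ) ^ (i.toNat * j.toNat) := by
    have h2 : i * j = ((i.toNat * j.toNat : ℕ) : ℤ) := by
      push_cast
      rw [Int.toNat_of_nonneg hi, Int.toNat_of_nonneg hj]
    rw [h2, Int.coe_negOnePow_natCast]
  refine LinearMap.ext fun x => ?_
  show gcomm R i j (LinearMap.mulLeft R a) b x = 0
  rw [gcomm_apply, hsign]
  simp only [LinearMap.mulLeft_apply]
  rw [← mul_assoc, mul_comm_graded ha hb, smul_mul_assoc, ← mul_assoc, sub_self]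

lemma isDiff_contract (d : Module.Dual R N) :
    IsDiff R (extGrading R N) (-1) 1 (CliffordAlgebra.contractLeft d) := by
  intro i a ha
  rcases lt_or_ge i 0 with hi | hi
  · rw [extGrading_neg hi ha, gcomm_zero_right]
    exact isDiff_zero _ _ _
  obtain ⟨n, rfl⟩ : ∃ n : ℕ, i = (n : ℤ) := ⟨i.toNat, (Int.toNat_of_nonneg hi).symm⟩
  rw [extGrading, if_pos hi, Int.toNat_natCast] at ha
  have hgc : gcomm R (-1) (n : ℤ) (CliffordAlgebra.contractLeft d) a
      = LinearMap.mulLeft R (CliffordAlgebra.contractLeft d a) := by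
    have hsign : (((-1) * (n : ℤ)).negOnePow : ℤ) = (-1 : ℤ) ^ n := by
      rw [neg_one_mul, Int.negOnePow_neg, Int.coe_negOnePow_natCast]
    refine LinearMap.ext fun x => ?_
    rw [gcomm_apply, hsign]
    simp only [LinearMap.mulLeft_apply]
    rw [contract_mul d ha, add_sub_cancel_right]
  rw [hgc]
  cases n with
  | zero =>
    rw [(contract_mem d (by simpa using ha)).2 rfl, LinearMap.mulLeft_zero_eq_zero]
    exact isDiff_zero _ _ _
  | succ n' =>
    have hmem : CliffordAlgebra.contractLeft d a ∈ ιRange R N ^ n' := by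
      simpa using (contract_mem d ha).1
    have h3 := isDiff_mulLeft (R := R) (mem_extGrading_of_pow hmem)
    have heq : (-1 : ℤ) + ((n' + 1 : ℕ) : ℤ) = (n' : ℤ) := by push_cast; ring
    rwa [← heq] at h3

end ExtAux2
section IntAux

open ExteriorAlgebra

variable {R : Type} [CommRing R] {M : Type} [AddCommGroup M] [Module R M]

lemma intProd_ι (m : M) :
    intProd R M (ι R m) = CliffordAlgebra.contractLeft (Module.Dual.eval R M m) := by
  rw [intProd, CliffordAlgebra.lift_ι_apply]
  rfl

lemma intProd_algebraMap (r : R) :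
    intProd R M (algebraMap R _ r) = r • (LinearMap.id : Module.End R (Forms R M)) := by
  rw [AlgHom.commutes]
  rfl

lemma isDiff_intProd (p : ℕ) (η : ExteriorAlgebra R M) (hη : η ∈ ιRange R M ^ p) :
    IsDiff R (extGrading R (Module.Dual R M)) (-(p : ℤ)) p (intProd R M η) := by
  induction hη using Submodule.pow_induction_on_left' with
  | algebraMap r =>
    rw [intProd_algebraMap]
    intro j b _
    refine LinearMap.ext fun x => ?_
    rw [gcomm_apply]
    have h0 : (((-(0 : ℕ) : ℤ)) * j).negOnePow = 1 := by norm_num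
    rw [h0]
    simp [mul_smul_comm]
  | add x y n hx hy ihx ihy =>
    rw [map_add]; exact isDiff_add ihx ihy
  | mem_mul m hm n x hx ihx =>
    obtain ⟨v, rfl⟩ := hm
    rw [map_mul, intProd_ι]
    have h := isDiff_comp (𝒜 := extGrading R (Module.Dual R M)) (n + 1) 1 n (by omega)
      (-1) (-(n : ℤ)) _ _ (isDiff_contract (Module.Dual.eval R M v)) ihx
    have heq : (-1 : ℤ) + -(n : ℤ) = -((n + 1 : ℕ) : ℤ) := by push_cast; ring
    rw [heq] at h
    rwa [Module.End.mul_eq_comp]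

lemma key_pointwise (φ : Module.Dual R M) {p : ℕ} {η : ExteriorAlgebra R M}
    (hη : η ∈ ιRange R M ^ p) (ω : Forms R M) :
    intProd R M η (ι R φ * ω)
      = ((-1 : ℤ) ^ p) • (ι R φ * intProd R M η ω)
        + ((-1 : ℤ) ^ (p + 1)) • intProd R M (CliffordAlgebra.contractLeft φ η) ω := by
  induction hη using Submodule.pow_induction_on_left' generalizing ω with
  | algebraMap r =>
    rw [CliffordAlgebra.contractLeft_algebraMap, map_zero, intProd_algebraMap]
    simp [mul_smul_comm]
  | add x y n hx hy ihx ihy =>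
    simp only [map_add, LinearMap.add_apply, mul_add, smul_add]
    rw [ihx ω, ihy ω]
    abel
  | mem_mul m hm n x hx ihx =>
    obtain ⟨v, rfl⟩ := hm
    have hc : ∀ τ : Forms R M,
        intProd R M (ι R v * x) τ
          = CliffordAlgebra.contractLeft (Module.Dual.eval R M v) (intProd R M x τ) := by
      intro τ
      rw [map_mul, intProd_ι, Module.End.mul_apply]
    have hcφ : ∀ τ : Forms R M,
        CliffordAlgebra.contractLeft (Module.Dual.eval R M v) (ι R φ * τ)
          = φ v • τ - ι R φ * CliffordAlgebra.contractLeft (Module.Dual.eval R M v) τ :=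
      fun τ => by simpa using CliffordAlgebra.contractLeft_ι_mul (d := Module.Dual.eval R M v) φ τ
    have hcontr : CliffordAlgebra.contractLeft φ (ι R v * x)
        = φ v • x - ι R v * CliffordAlgebra.contractLeft φ x :=
      CliffordAlgebra.contractLeft_ι_mul (d := φ) v x
    rw [hc, hc, ihx ω, map_add, map_zsmul, map_zsmul, hcφ, hcontr, map_sub, map_smul,
      LinearMap.sub_apply, LinearMap.smul_apply, map_mul, intProd_ι, Module.End.mul_apply]
    simp only [pow_succ]
    module

lemma key_identity (φ : Module.Dual R M) {p : ℕ} {η : ExteriorAlgebra R M}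
    (hη : η ∈ ιRange R M ^ p) :
    gcomm R (-(p : ℤ)) 1 (intProd R M η) (ι R φ)
      = ((-1 : ℤ) ^ (p + 1)) • intProd R M (CliffordAlgebra.contractLeft φ η) := by
  have hsign : ((-(p : ℤ) * 1).negOnePow : ℤ) = (-1 : ℤ) ^ p := by
    rw [mul_one, Int.negOnePow_neg, Int.coe_negOnePow_natCast]
  refine LinearMap.ext fun ω => ?_
  rw [gcomm_apply, hsign, key_pointwise φ hη ω]
  simp only [LinearMap.smul_apply]
  abel

lemma intProd_scalar_zero {η : ExteriorAlgebra R M} (hη : η ∈ ιRange R M ^ 0)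
    (h : intProd R M η = 0) : η = 0 := by
  rw [pow_zero] at hη
  obtain ⟨r, rfl⟩ := Submodule.mem_one.mp hη
  have h1 : intProd R M (algebraMap R _ r) (1 : Forms R M) = 0 := by rw [h]; rfl
  rw [intProd_algebraMap] at h1
  have h2 : algebraMap R (Forms R M) r = 0 := by
    simpa [Algebra.algebraMap_eq_smul_one] using h1
  have h3 : r = 0 := by
    have h5 := ExteriorAlgebra.algebraMap_leftInverse (M := Module.Dual R M) r
    rw [h2, map_zero] at h5
    exact h5.symm
  rw [h3, map_zero]

end IntAux
section Nondegen

open ExteriorAlgebra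

variable {R : Type} [CommRing R] {M : Type} [AddCommGroup M] [Module R M]

lemma contract_vanish {φ : Module.Dual R M} {W : Submodule R M}
    (hφ : ∀ v ∈ W, φ v = 0) {n : ℕ} {a : ExteriorAlgebra R M}
    (ha : a ∈ (Submodule.map (ι R : M →ₗ[R] ExteriorAlgebra R M) W) ^ n) :
    CliffordAlgebra.contractLeft φ a = 0 := by
  induction ha using Submodule.pow_induction_on_left' with
  | algebraMap r => rw [CliffordAlgebra.contractLeft_algebraMap]
  | add x y i hx hy ihx ihy => rw [map_add, ihx, ihy, add_zero]
  | mem_mul m hm i z hz ihz =>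
    obtain ⟨v, hv, rfl⟩ := hm
    rw [CliffordAlgebra.contractLeft_ι_mul, ihz, mul_zero, sub_zero, hφ v hv, zero_smul]

lemma decomp_insert {e : M} {W : Submodule R M} {p : ℕ} {η : ExteriorAlgebra R M}
    (hη : η ∈ (Submodule.map (ι R : M →ₗ[R] ExteriorAlgebra R M) ((R ∙ e) ⊔ W)) ^ p) :
    ∃ η₁ η₂ : ExteriorAlgebra R M,
      η₁ ∈ (Submodule.map (ι R : M →ₗ[R] ExteriorAlgebra R M) W) ^ (p - 1) ∧
      η₂ ∈ (Submodule.map (ι R : M →ₗ[R] ExteriorAlgebra R M) W) ^ p ∧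
      η = ι R e * η₁ + η₂ ∧ (p = 0 → η₁ = 0) := by
  induction hη using Submodule.pow_induction_on_left' with
  | algebraMap r =>
    exact ⟨0, algebraMap R _ r, zero_mem _, Submodule.algebraMap_mem r,
      by rw [mul_zero, zero_add], fun _ => rfl⟩
  | add x y i hx hy ihx ihy =>
    obtain ⟨x₁, x₂, hx₁, hx₂, rfl, hx0⟩ := ihx
    obtain ⟨y₁, y₂, hy₁, hy₂, rfl, hy0⟩ := ihy
    exact ⟨x₁ + y₁, x₂ + y₂, add_mem hx₁ hy₁, add_mem hx₂ hy₂, by rw [mul_add]; abel,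
      fun h => by rw [hx0 h, hy0 h, add_zero]⟩
  | mem_mul m hm i z hz ihz =>
    obtain ⟨v, hv, rfl⟩ := hm
    obtain ⟨z₁, z₂, hz₁, hz₂, rfl, hz0⟩ := ihz
    obtain ⟨u, hu, w, hw, rfl⟩ := Submodule.mem_sup.mp hv
    obtain ⟨c, rfl⟩ := Submodule.mem_span_singleton.mp hu
    have hιw : (ι R w : ExteriorAlgebra R M) ∈
        Submodule.map (ι R : M →ₗ[R] ExteriorAlgebra R M) W := ⟨w, hw, rfl⟩
    have h1 : (ι R w : ExteriorAlgebra R M) * ι R e = -(ι R e * ι R w) :=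
      eq_neg_of_add_eq_zero_left (ι_add_mul_swap w e)
    have h2 : (ι R e : ExteriorAlgebra R M) * ι R e = 0 := ι_sq_zero e
    refine ⟨c • z₂ - ι R w * z₁, ι R w * z₂, ?_, ?_, ?_, fun h => absurd h (Nat.succ_ne_zero i)⟩
    · rw [Nat.succ_sub_one]
      refine sub_mem (Submodule.smul_mem _ _ hz₂) ?_
      cases i with
      | zero => rw [hz0 rfl, mul_zero]; exact zero_mem _
      | succ i' =>
        have hmul : (ι R w : ExteriorAlgebra R M) * z₁ ∈
            (Submodule.map (ι R : M →ₗ[R] ExteriorAlgebra R M) W) ^ 1 *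
            (Submodule.map (ι R : M →ₗ[R] ExteriorAlgebra R M) W) ^ i' := by
          refine Submodule.mul_mem_mul (by rwa [pow_one]) ?_
          simpa using hz₁
        rwa [← pow_add, add_comm] at hmul
    · rw [pow_succ']
      exact Submodule.mul_mem_mul hιw hz₂
    · rw [map_add, map_smul]
      simp only [add_mul, mul_add, smul_mul_assoc, mul_sub, mul_smul_comm]
      rw [← mul_assoc, ← mul_assoc, h1, h2, zero_mul, smul_zero, zero_add, neg_mul]
      simp only [mul_assoc]
      abel

variable [Module.Free R M] [Module.Finite R M] [Nontrivial R]

lemma contract_forall_zero {p : ℕ} {η : ExteriorAlgebra R M}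
    (hη : η ∈ ιRange R M ^ (p + 1))
    (h : ∀ φ : Module.Dual R M, CliffordAlgebra.contractLeft φ η = 0) : η = 0 := by
  classical
  let b := Module.Free.chooseBasis R M
  -- general claim over finsets of basis vectors
  have main : ∀ s : Finset (Module.Free.ChooseBasisIndex R M), ∀ q : ℕ,
      ∀ ζ : ExteriorAlgebra R M,
      ζ ∈ (Submodule.map (ι R : M →ₗ[R] ExteriorAlgebra R M)
        (Submodule.span R (b '' s))) ^ (q + 1) →
      (∀ φ : Module.Dual R M, CliffordAlgebra.contractLeft φ ζ = 0) → ζ = 0 := by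
    intro s
    induction s using Finset.induction with
    | empty =>
      intro q ζ hζ _
      rw [Finset.coe_empty, Set.image_empty, Submodule.span_empty, Submodule.map_bot, pow_succ,
        Submodule.mul_bot] at hζ
      exact (Submodule.mem_bot R).mp hζ
    | @insert i t hit ih =>
      intro q ζ hζ hcontr
      rw [Finset.coe_insert, Set.image_insert_eq, Submodule.span_insert] at hζ
      obtain ⟨ζ₁, ζ₂, hζ₁, hζ₂, rfl, -⟩ := decomp_insert hζ
      rw [Nat.succ_sub_one] at hζ₁
      have hφ0 : ∀ v ∈ Submodule.span R (b '' t), b.coord i v = 0 := by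
        intro v hv
        have hle : Submodule.span R (b '' ↑t) ≤ LinearMap.ker (b.coord i) := by
          rw [Submodule.span_le]
          rintro _ ⟨j, hj, rfl⟩
          have hne : j ≠ i := fun hji => hit (hji ▸ hj)
          simp [Module.Basis.coord_apply, Module.Basis.repr_self, Finsupp.single_apply, hne]
        exact hle hv
      have hζ₁0 : ζ₁ = 0 := by
        have hc := hcontr (b.coord i)
        rw [map_add, CliffordAlgebra.contractLeft_ι_mul,
          contract_vanish hφ0 hζ₂, add_zero] at hc
        have hcz : CliffordAlgebra.contractLeft (b.coord i) ζ₁ = 0 :=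
          contract_vanish hφ0 hζ₁
        rw [hcz, mul_zero, sub_zero] at hc
        simpa [Module.Basis.coord_apply, Module.Basis.repr_self] using hc
      rw [hζ₁0, mul_zero, zero_add] at hcontr ⊢
      exact ih q ζ₂ hζ₂ hcontr
  have hspan : Submodule.span R (b '' ↑(Finset.univ : Finset (Module.Free.ChooseBasisIndex R M))) = ⊤ := by
    rw [Finset.coe_univ, Set.image_univ]
    exact b.span_eq
  refine main Finset.univ p η ?_ h
  rw [hspan, Submodule.map_top]
  exact hη

end Nondegen

section Final

open ExteriorAlgebra

variable {R : Type} [CommRing R] [Nontrivial R]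
variable {M : Type} [AddCommGroup M] [Module R M] [Module.Free R M] [Module.Finite R M]

lemma ι_mem_extGrading_one (φ : Module.Dual R M) :
    (ι R φ : Forms R M) ∈ extGrading R (Module.Dual R M) 1 := by
  rw [extGrading, if_pos (by norm_num)]
  show (ι R φ : Forms R M) ∈ ιRange R (Module.Dual R M) ^ (1 : ℤ).toNat
  rw [Int.toNat_one, pow_one]
  exact ⟨φ, rfl⟩

lemma conv_aux : ∀ (p : ℕ) (η : ExteriorAlgebra R M), η ∈ ιRange R M ^ (p + 1) →
    IsDiff R (extGrading R (Module.Dual R M)) (-((p + 1 : ℕ) : ℤ)) p (intProd R M η) →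
    η = 0 := by
  intro p
  induction p with
  | zero =>
    intro η hη h
    refine contract_forall_zero hη fun φ => ?_
    have h0 := h 1 (ι R φ) (ι_mem_extGrading_one φ)
    rw [show ((0 + 1 : ℕ) : ℤ) = ((1 : ℕ) : ℤ) by norm_num] at h0
    rw [key_identity φ hη] at h0
    have h1 : intProd R M (CliffordAlgebra.contractLeft φ η) = 0 := by
      have := congrArg (fun f => ((-1 : ℤ) ^ (1 + 1)) • f) h0
      simpa using this
    exact intProd_scalar_zero (by simpa using (contract_mem φ hη).1) h1
  | succ q ih =>
    intro η hη h
    refine contract_forall_zero hη fun φ => ?_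
    have h0 := h 1 (ι R φ) (ι_mem_extGrading_one φ)
    rw [key_identity φ hη] at h0
    have hdeg : -((q + 1 + 1 : ℕ) : ℤ) + 1 = -((q + 1 : ℕ) : ℤ) := by push_cast; ring
    rw [hdeg] at h0
    have h1 : IsDiff R (extGrading R (Module.Dual R M)) (-((q + 1 : ℕ) : ℤ)) q
        (intProd R M (CliffordAlgebra.contractLeft φ η)) := by
      have h2 := isDiff_zsmul ((-1 : ℤ) ^ (q + 1 + 1 + 1)) h0
      rwa [smul_smul, ← pow_add,
        show (-1 : ℤ) ^ (q + 1 + 1 + 1 + (q + 1 + 1 + 1)) = 1 by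
          rw [← two_mul]; exact Even.neg_one_pow ⟨q + 1 + 1 + 1, by ring⟩,
        one_smul] at h2
    have hmem : CliffordAlgebra.contractLeft φ η ∈ ιRange R M ^ (q + 1) := by
      simpa using (contract_mem φ hη).1
    exact ih _ hmem h1

end Final

/-- The interior product by a `p`-vector field `η` is a differential
operator of order `≤ p` (of degree `-p`), and it has order `≤ p - 1` iff `η = 0`. -/
theorem interior_product_order (p : ℕ) (η : ExteriorAlgebra R M)
    (hη : η ∈ LinearMap.range (ExteriorAlgebra.ι R : M →ₗ[R] ExteriorAlgebra R M) ^ p) :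
    IsDiff R (FormsGrading R M) (-(p : ℤ)) p (intProd R M η) ∧
    (IsDiffZ R (FormsGrading R M) (-(p : ℤ)) ((p : ℤ) - 1) (intProd R M η) ↔ η = 0) := by
  have hgr : FormsGrading R M = extGrading R (Module.Dual R M) := rfl
  constructor
  · rw [hgr]; exact isDiff_intProd p η hη
  constructor
  · intro h
    rw [IsDiffZ, hgr] at h
    cases p with
    | zero =>
      rw [if_neg (by norm_num)] at h
      exact intProd_scalar_zero hη h
    | succ q =>
      rw [if_pos (by push_cast; omega)] at h
      have ht : (((q + 1 : ℕ) : ℤ) - 1).toNat = q := by omega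
      rw [ht] at h
      exact conv_aux q η hη h
  · rintro rfl
    rw [map_zero, IsDiffZ]
    split_ifs with h
    · exact isDiff_zero _ _ _
    · rfl
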